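/- Let g : ℝᵐ → ℝ ∪ {+∞} be convex and lower semicontinuous, let F : ℝⁿ → ℝᵐ have continuously differentiable components, let x̄ ∈ ℝⁿ satisfy F(x̄) ∈ int(dom g), let Υ > 0, κ_G > 0, Δ̄ > 0, and for each Δ ∈ (0, Δ̄) let F̃_Δ : ℝⁿ → ℝᵐ have C¹ components with F̃_Δ(x̄) = F(x̄) and ‖∇F_i(y) − ∇F̃_{i,Δ}(y)‖ ≤ κ_G Δ^Υ for all i and all y ∈ B_Δ(x̄). Let M = sup{‖w‖ : w ∈ ∂g(F(x̄))} (finite since F(x̄) ∈ int(dom g)). Then for every Δ ∈ (0, Δ̄) and every v ∈ ∇F(x̄)ᵀ ∂g(F(x̄)) there exists ṽ ∈ ∇F̃_Δ(x̄)ᵀ ∂g(F(x̄)) with ‖v − ṽ‖ ≤ M √m κ_G Δ^Υ. -/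

import Mathlib

open Metric Set

/-- The (convex) subdifferential of an extended-real-valued function `g` at `z̄`:
`∂g(z̄) = {w : g(z) ≥ g(z̄) + ⟨w, z − z̄⟩ for all z}`. -/
def ERealSubdiff13 {m : ℕ} (g : EuclideanSpace ℝ (Fin m) → EReal)
    (zbar : EuclideanSpace ℝ (Fin m)) : Set (EuclideanSpace ℝ (Fin m)) :=
  {w | ∀ z, g zbar + ((inner ℝ w (z - zbar) : ℝ) : EReal) ≤ g z}

/-!
The model gradients enter only at `x̄`, and the same subgradient `w ∈ ∂g(F(x̄))` that produces
`v = ∇F(x̄)ᵀ w` produces `ṽ = ∇F̃_Δ(x̄)ᵀ w`. Then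
`‖v − ṽ‖ ≤ ∑ |wᵢ| κG Δ^Υ ≤ √m ‖w‖ κG Δ^Υ ≤ √m M κG Δ^Υ`.
The bound `‖w‖ ≤ M` needs `M` to be a genuine supremum, i.e. `∂g(F(x̄))` bounded: on the
interior of its domain `g` is a finite convex function, hence continuous, hence bounded above
near `F(x̄)`, and a subgradient inequality against a function bounded above on a ball bounds
the subgradient.
-/

lemma convexOn_toReal_of_convex_epigraph {E : Type*} [AddCommGroup E] [Module ℝ E]
    {g : E → EReal} (hgbot : ∀ z, g z ≠ ⊥)
    (hconv : Convex ℝ {p : E × ℝ | g p.1 ≤ (p.2 : EReal)}) :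
    ConvexOn ℝ {z | g z < ⊤} fun z => (g z).toReal := by
  have hepi : ∀ z ∈ {z | g z < ⊤}, (z, (g z).toReal) ∈ {p : E × ℝ | g p.1 ≤ (p.2 : EReal)} :=
    fun z hz => (EReal.coe_toReal hz.ne (hgbot z)).ge
  have hdom : {z | g z < ⊤} = Prod.fst '' {p : E × ℝ | g p.1 ≤ (p.2 : EReal)} := by
    ext z
    refine ⟨fun hz => ⟨_, hepi z hz, rfl⟩, ?_⟩
    rintro ⟨⟨z, t⟩, hzt, rfl⟩
    exact hzt.trans_lt (EReal.coe_lt_top t)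
  refine ⟨hdom ▸ hconv.linear_image (LinearMap.fst ℝ E ℝ), ?_⟩
  intro x hx y hy a b ha hb hab
  have hmix := hconv (hepi x hx) (hepi y hy) ha hb hab
  simp only [Prod.smul_mk, Prod.mk_add_mk, smul_eq_mul, mem_ofPred_eq] at hmix
  exact (EReal.toReal_le_toReal hmix (hgbot _) (EReal.coe_ne_top _)).trans_eq
    (EReal.toReal_coe _)

lemma mul_norm_le_of_forall_inner_le {E : Type*} [NormedAddCommGroup E] [InnerProductSpace ℝ E]
    {w : E} {r c : ℝ} (hr : 0 ≤ r) (h : ∀ u : E, ‖u‖ ≤ r → inner ℝ w u ≤ c) :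
    r * ‖w‖ ≤ c := by
  rcases eq_or_ne w 0 with rfl | hw
  · simpa using h 0 (by simpa using hr)
  have hw' : 0 < ‖w‖ := norm_pos_iff.2 hw
  have hu : ‖(r / ‖w‖) • w‖ = r := by
    rw [norm_smul, Real.norm_eq_abs, abs_of_nonneg (by positivity), div_mul_cancel₀ _ hw'.ne']
  have := h _ hu.le
  rwa [real_inner_smul_right, real_inner_self_eq_norm_sq, sq, ← mul_assoc,
    div_mul_cancel₀ _ hw'.ne'] at this

lemma bddAbove_norm_image_ERealSubdiff13 {m : ℕ} {g : EuclideanSpace ℝ (Fin m) → EReal}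
    (hgbot : ∀ z, g z ≠ ⊥)
    (hconv : Convex ℝ {p : EuclideanSpace ℝ (Fin m) × ℝ | g p.1 ≤ (p.2 : EReal)})
    {zbar : EuclideanSpace ℝ (Fin m)} (hdom : zbar ∈ interior {z | g z < ⊤}) :
    BddAbove ((fun w => ‖w‖) '' ERealSubdiff13 g zbar) := by
  set f := fun z => (g z).toReal
  have hfg : ∀ z ∈ interior {z | g z < ⊤}, ((f z : ℝ) : EReal) = g z :=
    fun z hz => EReal.coe_toReal (mem_ofPred.1 (interior_subset hz)).ne (hgbot z)
  have hcont : ContinuousAt f zbar :=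
    (convexOn_toReal_of_convex_epigraph hgbot hconv).continuousOn_interior.continuousAt
      (isOpen_interior.mem_nhds hdom)
  obtain ⟨ε, hε, hnear⟩ := Metric.eventually_nhds_iff.1
    ((isOpen_interior.eventually_mem hdom).and (hcont.eventually (gt_mem_nhds (lt_add_one (f zbar)))))
  refine ⟨1 / (ε / 2), ?_⟩
  rintro _ ⟨w, hw, rfl⟩
  rw [le_div_iff₀' (by positivity)]
  refine mul_norm_le_of_forall_inner_le (by positivity) fun u hu => ?_
  obtain ⟨hint, hlt⟩ := hnear (y := zbar + u) (by
    rw [dist_eq_norm, add_sub_cancel_left]; linarith)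
  have hsub := hw (zbar + u)
  rw [add_sub_cancel_left, ← hfg zbar hdom, ← hfg _ hint, ← EReal.coe_add] at hsub
  linarith [EReal.coe_le_coe_iff.1 hsub]

lemma sum_abs_le_sqrt_card_mul_norm {ι : Type*} [Fintype ι] (w : EuclideanSpace ℝ ι) :
    ∑ i, |w i| ≤ √(Fintype.card ι) * ‖w‖ := by
  have hsq : (∑ i, |w i|) ^ 2 ≤ (√(Fintype.card ι) * ‖w‖) ^ 2 := by
    rw [mul_pow, Real.sq_sqrt (Nat.cast_nonneg _), EuclideanSpace.norm_eq,
      Real.sq_sqrt (by positivity)]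
    simpa using sq_sum_le_card_mul_sum_sq (s := Finset.univ) (f := fun i => |w i|)
  exact (pow_le_pow_iff_left₀ (by positivity) (by positivity) two_ne_zero).1 hsq

lemma norm_sum_smul_sub_sum_smul_le {ι E : Type*} [Fintype ι] [NormedAddCommGroup E]
    [NormedSpace ℝ E] (w : EuclideanSpace ℝ ι) {a b : ι → E} {ε : ℝ} (hε : 0 ≤ ε)
    (hab : ∀ i, ‖a i - b i‖ ≤ ε) :
    ‖∑ i, w i • a i - ∑ i, w i • b i‖ ≤ √(Fintype.card ι) * ‖w‖ * ε :=
  calc ‖∑ i, w i • a i - ∑ i, w i • b i‖ = ‖∑ i, w i • (a i - b i)‖ := by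
        simp only [smul_sub, Finset.sum_sub_distrib]
    _ ≤ ∑ i, |w i| * ε := by
        refine (norm_sum_le _ _).trans (Finset.sum_le_sum fun i _ => ?_)
        rw [norm_smul, Real.norm_eq_abs]
        exact mul_le_mul_of_nonneg_left (hab i) (abs_nonneg _)
    _ ≤ √(Fintype.card ι) * ‖w‖ * ε := by
        rw [← Finset.sum_mul]
        exact mul_le_mul_of_nonneg_right (sum_abs_le_sqrt_card_mul_norm w) hε

theorem subdifferential_approximation_order_fwd_general {n m : ℕ}
    (g : EuclideanSpace ℝ (Fin m) → EReal)
    (hgbot : ∀ z, g z ≠ ⊥)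
    (hconv : Convex ℝ {p : EuclideanSpace ℝ (Fin m) × ℝ | g p.1 ≤ (p.2 : EReal)})
    (F : Fin m → EuclideanSpace ℝ (Fin n) → ℝ)
    (xbar : EuclideanSpace ℝ (Fin n))
    (hdom : (WithLp.toLp 2 (fun i => F i xbar) : EuclideanSpace ℝ (Fin m)) ∈ interior {z | g z < ⊤})
    (Υ κG Δbar : ℝ) (hκG : 0 < κG)
    (Ft : ℝ → Fin m → EuclideanSpace ℝ (Fin n) → ℝ)
    (hgrad : ∀ Δ ∈ Ioo (0:ℝ) Δbar, ∀ i, ∀ y ∈ ball xbar Δ,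
      ‖gradient (F i) y - gradient (Ft Δ i) y‖ ≤ κG * Δ ^ Υ)
    (M : ℝ)
    (hM : M = sSup ((fun w => ‖w‖) ''
      ERealSubdiff13 g (WithLp.toLp 2 (fun i => F i xbar) : EuclideanSpace ℝ (Fin m)))) :
    ∀ Δ ∈ Ioo (0:ℝ) Δbar,
      ∀ v ∈ (fun w : EuclideanSpace ℝ (Fin m) => ∑ i, w i • gradient (F i) xbar) ''
        ERealSubdiff13 g (WithLp.toLp 2 (fun i => F i xbar) : EuclideanSpace ℝ (Fin m)),
      ∃ vt ∈ (fun w : EuclideanSpace ℝ (Fin m) => ∑ i, w i • gradient (Ft Δ i) xbar) ''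
        ERealSubdiff13 g (WithLp.toLp 2 (fun i => F i xbar) : EuclideanSpace ℝ (Fin m)),
      ‖v - vt‖ ≤ M * Real.sqrt m * κG * Δ ^ Υ := by
  rintro Δ hΔ _ ⟨w, hw, rfl⟩
  refine ⟨_, ⟨w, hw, rfl⟩, ?_⟩
  have hwM : ‖w‖ ≤ M :=
    hM ▸ le_csSup (bddAbove_norm_image_ERealSubdiff13 hgbot hconv hdom) ⟨w, hw, rfl⟩
  have hε : 0 ≤ κG * Δ ^ Υ := mul_nonneg hκG.le (Real.rpow_nonneg hΔ.1.le Υ)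
  calc _ ≤ √m * ‖w‖ * (κG * Δ ^ Υ) := by
        simpa using norm_sum_smul_sub_sum_smul_le w hε
          fun i => hgrad Δ hΔ i xbar (mem_ball_self hΔ.1)
    _ ≤ √m * M * (κG * Δ ^ Υ) := by gcongr
    _ = M * √m * κG * Δ ^ Υ := by ring

/-- Extension of the subdifferential approximation theorem (forward direction) to models with
gradient error of order `Δ^Υ` (e.g. fully quadratic models, `Υ = 2`): for every
`v ∈ ∇F(x̄)ᵀ ∂g(F(x̄))` there exists `ṽ ∈ ∇F̃_Δ(x̄)ᵀ ∂g(F(x̄))` with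
`‖v − ṽ‖ ≤ M √m κG Δ^Υ`. -/
theorem subdifferential_approximation_order_fwd {n m : ℕ}
    (g : EuclideanSpace ℝ (Fin m) → EReal)
    (hgbot : ∀ z, g z ≠ ⊥)
    (hconv : Convex ℝ {p : EuclideanSpace ℝ (Fin m) × ℝ | g p.1 ≤ (p.2 : EReal)})
    (hlsc : IsClosed {p : EuclideanSpace ℝ (Fin m) × ℝ | g p.1 ≤ (p.2 : EReal)})
    (F : Fin m → EuclideanSpace ℝ (Fin n) → ℝ)
    (hF : ∀ i, ContDiff ℝ 1 (F i))
    (xbar : EuclideanSpace ℝ (Fin n))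
    (hdom : (WithLp.toLp 2 (fun i => F i xbar) : EuclideanSpace ℝ (Fin m)) ∈ interior {z | g z < ⊤})
    (Υ κG Δbar : ℝ) (hΥ : 0 < Υ) (hκG : 0 < κG) (hΔbar : 0 < Δbar)
    (Ft : ℝ → Fin m → EuclideanSpace ℝ (Fin n) → ℝ)
    (hFtC1 : ∀ Δ ∈ Ioo (0:ℝ) Δbar, ∀ i, ContDiff ℝ 1 (Ft Δ i))
    (hcenter : ∀ Δ ∈ Ioo (0:ℝ) Δbar, ∀ i, Ft Δ i xbar = F i xbar)
    (hgrad : ∀ Δ ∈ Ioo (0:ℝ) Δbar, ∀ i, ∀ y ∈ ball xbar Δ,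
      ‖gradient (F i) y - gradient (Ft Δ i) y‖ ≤ κG * Δ ^ Υ)
    (M : ℝ)
    (hM : M = sSup ((fun w => ‖w‖) ''
      ERealSubdiff13 g (WithLp.toLp 2 (fun i => F i xbar) : EuclideanSpace ℝ (Fin m)))) :
    ∀ Δ ∈ Ioo (0:ℝ) Δbar,
      ∀ v ∈ (fun w : EuclideanSpace ℝ (Fin m) => ∑ i, w i • gradient (F i) xbar) ''
        ERealSubdiff13 g (WithLp.toLp 2 (fun i => F i xbar) : EuclideanSpace ℝ (Fin m)),
      ∃ vt ∈ (fun w : EuclideanSpace ℝ (Fin m) => ∑ i, w i • gradient (Ft Δ i) xbar) ''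
        ERealSubdiff13 g (WithLp.toLp 2 (fun i => F i xbar) : EuclideanSpace ℝ (Fin m)),
      ‖v - vt‖ ≤ M * Real.sqrt m * κG * Δ ^ Υ :=
  subdifferential_approximation_order_fwd_general g hgbot hconv F xbar hdom Υ κG Δbar hκG Ft hgrad M
    hM
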